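/- arXiv:1609.03657 — 2 statements merged into one kernel-verified Lean document; each statement's English description precedes it below -/
import Mathlib

section
/- If for every time step k and every agent i, the communication range is updated as d_i[k+1] = max over j in N^O_i[k] of ‖r_i[k] − r_j[k]‖ + (‖u_i[k]‖ + γ)·T, then every outgoing neighbor of agent i at step 0 remains an outgoing neighbor at all subsequent steps: N^O_i[0] ⊆ N^O_i[k] for all k. -/
/-!
Each step moves `r i - r j` by `T • (u i - u j)`, of norm at most `(‖u i‖ + γ) T`, while the
new range exceeds the old distance to every current neighbor by exactly that amount. Hence a
neighbor at step `k` is still one at step `k + 1`, and the claim follows by induction on `k`.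
-/

/-- The outgoing neighbor set of agent `i`: agents `j ≠ i` within range `d i`. -/
noncomputable def outNbr (N : ℕ) (r : Fin N → EuclideanSpace ℝ (Fin 2)) (d : Fin N → ℝ)
    (i : Fin N) : Finset (Fin N) :=
  Finset.univ.filter (fun j => j ≠ i ∧ ‖r i - r j‖ ≤ d i)

@[simp]
theorem mem_outNbr {N : ℕ} {r : Fin N → EuclideanSpace ℝ (Fin 2)} {d : Fin N → ℝ}
    {i j : Fin N} : j ∈ outNbr N r d i ↔ j ≠ i ∧ ‖r i - r j‖ ≤ d i := by
  simp [outNbr]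

theorem norm_add_smul_sub_add_smul_le {E : Type*} [SeminormedAddCommGroup E] [NormedSpace ℝ E]
    {T : ℝ} (hT : 0 ≤ T) (x y u v : E) :
    ‖(x + T • u) - (y + T • v)‖ ≤ ‖x - y‖ + T * (‖u‖ + ‖v‖) := by
  calc ‖(x + T • u) - (y + T • v)‖ = ‖(x - y) + T • (u - v)‖ := by
        rw [smul_sub]; abel_nf
    _ ≤ ‖x - y‖ + T * ‖u - v‖ := by
        grw [norm_add_le, norm_smul, Real.norm_of_nonneg hT]
    _ ≤ ‖x - y‖ + T * (‖u‖ + ‖v‖) := by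
        grw [norm_sub_le u v]

theorem mem_outNbr_of_step {N : ℕ} {T γ : ℝ} (hT : 0 ≤ T)
    {r r' u : Fin N → EuclideanSpace ℝ (Fin 2)} {d d' : Fin N → ℝ} {i j : Fin N}
    (hr' : ∀ i, r' i = r i + T • u i) (hu : ‖u j‖ ≤ γ)
    (hne : (outNbr N r d i).Nonempty)
    (hd' : d' i = (outNbr N r d i).sup' hne (fun j => ‖r i - r j‖) + (‖u i‖ + γ) * T)
    (hj : j ∈ outNbr N r d i) :
    j ∈ outNbr N r' d' i := by
  refine mem_outNbr.2 ⟨(mem_outNbr.1 hj).1, ?_⟩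
  have hsup : ‖r i - r j‖ ≤ (outNbr N r d i).sup' hne (fun j => ‖r i - r j‖) :=
    Finset.le_sup' (fun j => ‖r i - r j‖) hj
  calc ‖r' i - r' j‖ ≤ ‖r i - r j‖ + T * (‖u i‖ + ‖u j‖) := by
        rw [hr', hr']; exact norm_add_smul_sub_add_smul_le hT _ _ _ _
    _ ≤ d' i := by
        rw [hd']; grw [hsup, hu]; linarith

theorem outNbr_preserved_general (N : ℕ) (T γ : ℝ) (hT : 0 < T)
    (r u : ℕ → Fin N → EuclideanSpace ℝ (Fin 2)) (d : ℕ → Fin N → ℝ)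
    (hdyn : ∀ k i, r (k + 1) i = r k i + T • u k i)
    (hu : ∀ k i, ‖u k i‖ ≤ γ)
    (h0 : ∀ i, (outNbr N (r 0) (d 0) i).Nonempty)
    (hd : ∀ k i (hne : (outNbr N (r k) (d k) i).Nonempty),
      d (k + 1) i = (outNbr N (r k) (d k) i).sup' hne (fun j => ‖r k i - r k j‖)
        + (‖u k i‖ + γ) * T) :
    ∀ k i, outNbr N (r 0) (d 0) i ⊆ outNbr N (r k) (d k) i := by
  intro k
  induction k with
  | zero => exact fun _ => subset_rfl
  | succ k ih =>
    intro i j hj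
    have hne : (outNbr N (r k) (d k) i).Nonempty := (h0 i).mono (ih i)
    exact mem_outNbr_of_step hT.le (hdyn k) (hu k j) hne (hd k i hne) (ih i hj)

/-- If communication ranges are updated by
`d_i[k+1] = max_{j ∈ N^O_i[k]} ‖r_i[k] − r_j[k]‖ + (‖u_i[k]‖ + γ)T`, then all
outgoing neighbors at step `0` remain outgoing neighbors at every step `k`. -/
theorem outNbr_preserved (N : ℕ) (T γ : ℝ) (hT : 0 < T) (hγ : 0 < γ)
    (r u : ℕ → Fin N → EuclideanSpace ℝ (Fin 2)) (d : ℕ → Fin N → ℝ)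
    (hdyn : ∀ k i, r (k + 1) i = r k i + T • u k i)
    (hu : ∀ k i, ‖u k i‖ ≤ γ)
    (h0 : ∀ i, (outNbr N (r 0) (d 0) i).Nonempty)
    (hd : ∀ k i (hne : (outNbr N (r k) (d k) i).Nonempty),
      d (k + 1) i = (outNbr N (r k) (d k) i).sup' hne (fun j => ‖r k i - r k j‖)
        + (‖u k i‖ + γ) * T) :
    ∀ k i, outNbr N (r 0) (d 0) i ⊆ outNbr N (r k) (d k) i :=
  outNbr_preserved_general N T γ hT r u d hdyn hu h0 hd
end

section
/- If agent i communicates at times κ_1 < κ_2 < ⋯ and its communication range at time κ_{s+1} is chosen as d_i[κ_{s+1}] = max over j in N^O_i[κ_s] of ‖r_i[κ_s] − r_j[κ_s]‖ + (κ_{s+1} − κ_s)·(‖u_i[κ_s]‖ + γ)·T, and if between communication instants the per-step input bounds ‖u_i[k]‖ ≤ ‖u_i[κ_s]‖ and ‖u_j[k]‖ ≤ γ hold, then every outgoing neighbor of agent i at step κ_s remains within distance d_i[κ_{s+1}] of agent i at step κ_{s+1}. -/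
/-- Intermittent communication.  If agent `i` transmits at the
strictly increasing times `κ 1 < κ 2 < ⋯` and between transmissions its own
input norm stays below `‖u_i[κ_s]‖` while all other inputs stay below `γ`,
then every outgoing neighbor of `i` at step `κ s` is within distance
`max_{j∈N^O_i[κ_s]} ‖r_i[κ_s] − r_j[κ_s]‖ + (κ_{s+1} − κ_s)(‖u_i[κ_s]‖ + γ)T`
of agent `i` at step `κ (s+1)`. -/
theorem intermittent_range_preserves (N : ℕ) (T γ : ℝ) (hT : 0 < T) (hγ : 0 < γ)
    (r u : ℕ → Fin N → EuclideanSpace ℝ (Fin 2)) (d : ℕ → Fin N → ℝ)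
    (κ : ℕ → ℕ) (hκ : StrictMono κ)
    (hdyn : ∀ k j, r (k + 1) j = r k j + T • u k j)
    (i : Fin N) (s : ℕ)
    (hne : (outNbr N (r (κ s)) (d (κ s)) i).Nonempty)
    (hui : ∀ k, κ s ≤ k → k < κ (s + 1) → ‖u k i‖ ≤ ‖u (κ s) i‖)
    (huγ : ∀ k (j : Fin N), κ s ≤ k → k < κ (s + 1) → ‖u k j‖ ≤ γ) :
    ∀ j ∈ outNbr N (r (κ s)) (d (κ s)) i,
      ‖r (κ (s + 1)) i - r (κ (s + 1)) j‖ ≤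
        (outNbr N (r (κ s)) (d (κ s)) i).sup' hne
            (fun j => ‖r (κ s) i - r (κ s) j‖)
          + ((κ (s + 1) - κ s : ℕ) : ℝ) * (‖u (κ s) i‖ + γ) * T := by
  intro j hj
  have hab : κ s < κ (s + 1) := hκ (by omega)
  have key : ∀ t, κ s + t ≤ κ (s + 1) →
      ‖(r (κ s + t) i - r (κ s + t) j) - (r (κ s) i - r (κ s) j)‖
        ≤ (t : ℝ) * (‖u (κ s) i‖ + γ) * T := by
    intro t
    induction t with
    | zero => simp
    | succ t ih =>
      intro ht
      have h2 : κ s + t < κ (s + 1) := by omega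
      have ih' := ih (by omega)
      have hdi := hdyn (κ s + t) i
      have hdj := hdyn (κ s + t) j
      have step : ‖(r (κ s + t + 1) i - r (κ s + t + 1) j)
          - (r (κ s + t) i - r (κ s + t) j)‖ ≤ (‖u (κ s) i‖ + γ) * T := by
        rw [hdi, hdj]
        have heq : (r (κ s + t) i + T • u (κ s + t) i
            - (r (κ s + t) j + T • u (κ s + t) j))
            - (r (κ s + t) i - r (κ s + t) j)
            = T • u (κ s + t) i - T • u (κ s + t) j := by abel
        rw [heq]
        calc ‖T • u (κ s + t) i - T • u (κ s + t) j‖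
            ≤ ‖T • u (κ s + t) i‖ + ‖T • u (κ s + t) j‖ := norm_sub_le _ _
          _ = T * ‖u (κ s + t) i‖ + T * ‖u (κ s + t) j‖ := by
              rw [norm_smul, norm_smul, Real.norm_eq_abs, abs_of_pos hT]
          _ ≤ T * ‖u (κ s) i‖ + T * γ := by
              gcongr
              · exact hui _ (by omega) h2
              · exact huγ _ j (by omega) h2
          _ = (‖u (κ s) i‖ + γ) * T := by ring
      have hsplit : (r (κ s + (t + 1)) i - r (κ s + (t + 1)) j)
          - (r (κ s) i - r (κ s) j)
          = ((r (κ s + t + 1) i - r (κ s + t + 1) j)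
              - (r (κ s + t) i - r (κ s + t) j))
            + ((r (κ s + t) i - r (κ s + t) j) - (r (κ s) i - r (κ s) j)) := by
        rw [show κ s + (t + 1) = κ s + t + 1 from rfl]; abel
      rw [hsplit]
      calc ‖_ + _‖ ≤ _ + _ := norm_add_le _ _
        _ ≤ (‖u (κ s) i‖ + γ) * T + (t : ℝ) * (‖u (κ s) i‖ + γ) * T := by
            exact add_le_add step ih'
        _ = ((t + 1 : ℕ) : ℝ) * (‖u (κ s) i‖ + γ) * T := by push_cast; ring
  have hmm : κ s + (κ (s + 1) - κ s) = κ (s + 1) := by omega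
  have hk := key (κ (s + 1) - κ s) (by omega)
  rw [hmm] at hk
  have hsup : ‖r (κ s) i - r (κ s) j‖ ≤
      (outNbr N (r (κ s)) (d (κ s)) i).sup' hne
        (fun j => ‖r (κ s) i - r (κ s) j‖) :=
    Finset.le_sup' (fun j => ‖r (κ s) i - r (κ s) j‖) hj
  have htri : ‖r (κ (s + 1)) i - r (κ (s + 1)) j‖
      ≤ ‖(r (κ (s + 1)) i - r (κ (s + 1)) j) - (r (κ s) i - r (κ s) j)‖
        + ‖r (κ s) i - r (κ s) j‖ := by
    have := norm_add_le ((r (κ (s + 1)) i - r (κ (s + 1)) j)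
      - (r (κ s) i - r (κ s) j)) (r (κ s) i - r (κ s) j)
    simpa using this
  linarith
end
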